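/- McBryan–Spencer exponential decay bound for the XY model on a finite graph: let G = (V, E) be a finite graph, β > 0, x, y ∈ V, and suppose a : V → ℝ satisfies |a(u) − a(v)| ≤ 1/10 for every edge {u,v} ∈ E, β·Σ_{\{u,v\}∈E} (a(u)−a(v))² ≤ (a(y)−a(x))/2, and a(y) − a(x) ≥ m. Then |⟨cos(θ_x − θ_y)⟩_β| ≤ e^{−m/2}, where ⟨·⟩_β denotes the Gibbs expectation with Hamiltonian H(θ) = −Σ_{\{u,v\}∈E} cos(θ_u − θ_v) over θ ∈ [0,2π)^V. -/

import Mathlib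

open MeasureTheory

open Classical in
/-- The XY-model Hamiltonian `H(θ) = -Σ_{edges} cos(θ_u - θ_v)`
(each unordered edge counted once via the factor 1/2). -/
noncomputable def xyHamiltonian {V : Type*} [Fintype V] (G : SimpleGraph V)
    (θ : V → ℝ) : ℝ :=
  -((1 / 2) * ∑ u : V, ∑ v : V, if G.Adj u v then Real.cos (θ u - θ v) else 0)

open Classical in
/-- The Dirichlet energy `Σ_{edges} (a u - a v)²` (each unordered edge counted once). -/
noncomputable def edgeEnergy {V : Type*} [Fintype V] (G : SimpleGraph V)
    (a : V → ℝ) : ℝ :=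
  (1 / 2) * ∑ u : V, ∑ v : V, if G.Adj u v then (a u - a v) ^ 2 else 0

/-!
Write `F(z) = exp (i (z_y - z_x) - β H(z))` for the holomorphic extension of the Boltzmann
weight times the observable, so that the numerator of the Gibbs expectation is the real part of
`∫ F(θ) dθ` over the box `[0, 2π)^V`. Since `F` is entire and `2π`-periodic in each coordinate,
Cauchy's theorem on rectangles moves the contour of each coordinate `θ_v` to `θ_v + i a(v)`
without changing the integral. On the shifted contour the observable contributes
`e^{-(a(y) - a(x))}`, while `Re cos(θ_u - θ_v + i (a u - a v)) ≤ cos(θ_u - θ_v) + (a u - a v)²`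
costs at most `e^{β Σ (a u - a v)²} ≤ e^{(a(y) - a(x))/2}` against the real Boltzmann weight.
-/

open Complex Function Set

theorem Function.Periodic.intervalIntegral_add_mul_I_eq {E : Type*} [NormedAddCommGroup E]
    [NormedSpace ℂ E] {f : ℂ → E} {T : ℝ} (hf : Differentiable ℂ f)
    (hper : Periodic f T) (a c : ℝ) :
    ∫ t in a..a + T, f (t + c * I) = ∫ t in a..a + T, f t := by
  have hrect := integral_boundary_rect_eq_zero_of_differentiableOn f a (a + T + c * I)
    hf.differentiableOn
  have hside : ∀ y : ℝ, f (a + T + y * I) = f (a + y * I) := fun y => by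
    rw [add_right_comm]; exact hper _
  simp [hside] at hrect
  exact (sub_eq_zero.mp hrect).symm

theorem MeasureTheory.integral_pi_congr_of_integral_update {ι : Type*} [Fintype ι]
    [DecidableEq ι] {α : ι → Type*} [∀ i, MeasurableSpace (α i)] {μ : ∀ i, Measure (α i)}
    [∀ i, SigmaFinite (μ i)] {E : Type*} [NormedAddCommGroup E] [NormedSpace ℝ E]
    {f g : (∀ i, α i) → E} (hf : Integrable f (Measure.pi μ)) (hg : Integrable g (Measure.pi μ))
    (w : ι) (h : ∀ θ, ∫ t, f (update θ w t) ∂μ w = ∫ t, g (update θ w t) ∂μ w) :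
    ∫ θ, f θ ∂Measure.pi μ = ∫ θ, g θ ∂Measure.pi μ := by
  obtain _ | ⟨⟨θ₀⟩⟩ := isEmpty_or_nonempty (∀ i, α i)
  · simp only [integral_of_isEmpty]
  set e := MeasurableEquiv.piEquivPiSubtypeProd α (· = w)
  have he := (measurePreserving_piEquivPiSubtypeProd μ (· = w)).symm e
  have hslice : ∀ (k : (∀ i, α i) → E) q,
      ∫ r, k (e.symm (r, q)) ∂Measure.pi (fun i : {i // i = w} => μ i)
        = ∫ t, k (update (e.symm ((e θ₀).1, q)) w t) ∂μ w := by
    intro k q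
    refine Eq.trans ?_ ((measurePreserving_piUnique (fun i : {i // i = w} => μ i)).integral_comp'
      (fun t : α w => k (update (e.symm ((e θ₀).1, q)) w t)))
    congr 1 with r
    congr 1 with i
    by_cases hi : i = w
    · subst hi; simp [e, MeasurableEquiv.piEquivPiSubtypeProd, Equiv.piEquivPiSubtypeProd]; rfl
    · simp [e, hi]
  have hint : ∀ k : (∀ i, α i) → E, Integrable k (Measure.pi μ) →
      Integrable (fun z => k (e.symm z)) _ := fun k hk =>
    (he.integrable_comp_emb e.symm.measurableEmbedding).mpr hk
  rw [← he.integral_comp' f, ← he.integral_comp' g, integral_prod_symm _ (hint f hf),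
    integral_prod_symm _ (hint g hg)]
  congr 1 with q
  -- `convert` reconciles the two `Fintype {i // i = w}` instances that appear here.
  convert (hslice f q).trans ((h _).trans (hslice g q).symm) using 3

theorem Continuous.integrableOn_univ_pi_Ico {ι E : Type*} [Fintype ι] [NormedAddCommGroup E]
    {f : (ι → ℝ) → E} (hf : Continuous f) (a b : ℝ) :
    IntegrableOn f (univ.pi fun _ : ι => Ico a b) :=
  (pi_univ_Icc (fun _ => a) (fun _ => b) ▸ hf.integrableOn_Icc).mono_set
    (pi_mono fun _ _ => Ico_subset_Icc_self)

theorem differentiable_update {𝕜 ι : Type*} [NontriviallyNormedField 𝕜] [DecidableEq ι]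
    (z : ι → 𝕜) (w : ι) : Differentiable 𝕜 (update z w) :=
  fun ζ => (hasFDerivAt_update z ζ).differentiableAt

theorem integral_univ_pi_Ico_add_mul_I_eq {ι : Type*} [Fintype ι] [DecidableEq ι]
    {E : Type*} [NormedAddCommGroup E] [NormedSpace ℂ E]
    {F : (ι → ℂ) → E} {T : ℝ} (hT : 0 ≤ T) (hF : Differentiable ℂ F)
    (hper : ∀ z w, Periodic (fun ζ => F (update z w ζ)) T) (c : ι → ℝ) :
    ∫ θ in univ.pi (fun _ => Ico 0 T), F (fun i => θ i + c i * I)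
      = ∫ θ in univ.pi (fun _ => Ico 0 T), F (fun i => θ i) := by
  have hint : ∀ c : ι → ℝ, Integrable (fun θ : ι → ℝ => F (fun i => θ i + c i * I))
      (Measure.pi fun _ => volume.restrict (Ico 0 T)) := fun c => by
    rw [← Measure.restrict_pi_pi, ← volume_pi]
    exact (hF.continuous.comp (by fun_prop)).integrableOn_univ_pi_Ico 0 T
  suffices ∀ s : Finset ι, ∀ c : ι → ℝ, (∀ i ∉ s, c i = 0) →
      ∫ θ in univ.pi (fun _ => Ico 0 T), F (fun i => θ i + c i * I)
        = ∫ θ in univ.pi (fun _ => Ico 0 T), F (fun i => θ i) from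
    this Finset.univ c (by simp)
  intro s
  induction s using Finset.induction_on with
  | empty =>
    intro c hc
    simp [show c = 0 from funext fun i => hc i (Finset.notMem_empty i)]
  | insert w s _ ih =>
    intro c hc
    have hc' : ∀ i ∉ s, update c w 0 i = 0 := fun i hi => by
      by_cases hiw : i = w
      · simp [hiw]
      · simp [hiw, hc i (by simp [hiw, hi])]
    rw [← ih (update c w 0) hc', volume_pi, Measure.restrict_pi_pi]
    refine integral_pi_congr_of_integral_update (hint c) (hint _) w fun θ => ?_
    set G : ℂ → E := fun ζ => F (update (fun i => θ i + update c w 0 i * I) w ζ)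
    have hleft : ∀ t : ℝ, F (fun i => update θ w t i + c i * I) = G (t + c w * I) := fun t => by
      congr 1 with i
      by_cases hiw : i = w
      · subst hiw; simp
      · simp [hiw]
    have hright : ∀ t : ℝ, F (fun i => update θ w t i + update c w 0 i * I) = G t := fun t => by
      congr 1 with i
      by_cases hiw : i = w
      · subst hiw; simp
      · simp [hiw]
    simp only [hleft, hright]
    have hshift := (hper _ w).intervalIntegral_add_mul_I_eq (f := G)
      (hF.comp (differentiable_update _ w)) 0 (c w)
    rwa [zero_add, intervalIntegral.integral_of_le hT, intervalIntegral.integral_of_le hT,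
      ← integral_Ico_eq_integral_Ioc, ← integral_Ico_eq_integral_Ioc] at hshift

theorem Real.cosh_le_one_add_sq {q : ℝ} (hq : |q| ≤ 1) : Real.cosh q ≤ 1 + q ^ 2 := by
  have hpos := abs_le.mp (Real.abs_exp_sub_one_sub_id_le hq)
  have hneg := abs_le.mp (Real.abs_exp_sub_one_sub_id_le (x := -q) (by rwa [abs_neg]))
  rw [Real.cosh_eq]
  nlinarith [hpos.2, hneg.2]

theorem Complex.re_cos_add_mul_I_le {p q : ℝ} (hq : |q| ≤ 1) :
    (cos (p + q * I)).re ≤ Real.cos p + q ^ 2 := by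
  have hre : (cos (p + q * I)).re = Real.cos p * Real.cosh q := by
    simp [cos_add_mul_I, ← ofReal_cos, ← ofReal_cosh, ← ofReal_sin, ← ofReal_sinh]
  rw [hre]
  nlinarith [Real.cosh_le_one_add_sq hq, Real.cos_le_one p, Real.one_le_cosh q]

theorem Function.Periodic.comp_update_sub_update {α ι : Type*} [DecidableEq ι] {φ : ℂ → α}
    {T : ℂ} (hφ : Periodic φ T) (z : ι → ℂ) (w u v : ι) (ζ : ℂ) :
    φ (update z w (ζ + T) u - update z w (ζ + T) v) = φ (update z w ζ u - update z w ζ v) := by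
  by_cases hu : u = w <;> by_cases hv : v = w <;>
    simp only [update_apply, hu, hv, if_true, if_false]
  · ring_nf
  · rw [add_sub_right_comm]; exact hφ _
  · rw [sub_add_eq_sub_sub]; exact hφ.sub_eq _

section XYModel

variable {V : Type*} [Fintype V] (G : SimpleGraph V)

open Classical in
noncomputable def complexXYHamiltonian (z : V → ℂ) : ℂ :=
  -((1 / 2) * ∑ u : V, ∑ v : V, if G.Adj u v then cos (z u - z v) else 0)

theorem complexXYHamiltonian_ofReal (θ : V → ℝ) :
    complexXYHamiltonian G (fun v => θ v) = xyHamiltonian G θ := by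
  simp [complexXYHamiltonian, xyHamiltonian, ← ofReal_sub, ← ofReal_cos, apply_ite]

theorem differentiable_complexXYHamiltonian : Differentiable ℂ (complexXYHamiltonian G) := by
  refine (Differentiable.const_mul (Differentiable.fun_sum fun u _ =>
    Differentiable.fun_sum fun v _ => ?_) _).neg
  split_ifs <;> fun_prop

theorem continuous_xyHamiltonian : Continuous (xyHamiltonian G) := by
  have h : xyHamiltonian G = fun θ => (complexXYHamiltonian G fun v => θ v).re :=
    funext fun θ => by rw [complexXYHamiltonian_ofReal, ofReal_re]
  rw [h]
  exact continuous_re.comp ((differentiable_complexXYHamiltonian G).continuous.comp (by fun_prop))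

theorem complexXYHamiltonian_update_add_two_pi [DecidableEq V] (z : V → ℂ) (w : V) (ζ : ℂ) :
    complexXYHamiltonian G (update z w (ζ + 2 * Real.pi))
      = complexXYHamiltonian G (update z w ζ) := by
  simp only [complexXYHamiltonian, cos_periodic.comp_update_sub_update]

theorem xyHamiltonian_sub_edgeEnergy_le_re (θ a : V → ℝ)
    (hstep : ∀ u v : V, G.Adj u v → |a u - a v| ≤ 1) :
    xyHamiltonian G θ - edgeEnergy G a ≤ (complexXYHamiltonian G fun v => θ v + a v * I).re := by
  classical
  have hedge : ∀ u v, (if G.Adj u v then (cos ((θ u + a u * I) - (θ v + a v * I))).re else 0)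
      ≤ (if G.Adj u v then Real.cos (θ u - θ v) else 0)
        + (if G.Adj u v then (a u - a v) ^ 2 else 0) := by
    intro u v
    split_ifs with huv
    · convert re_cos_add_mul_I_le (p := θ u - θ v) (hstep u v huv) using 3
      push_cast
      ring
    · simp
  have hsum := Finset.sum_le_sum fun u (_ : u ∈ Finset.univ) =>
    Finset.sum_le_sum fun v (_ : v ∈ Finset.univ) => hedge u v
  simp only [Finset.sum_add_distrib] at hsum
  simp only [complexXYHamiltonian, xyHamiltonian, edgeEnergy, neg_re, mul_re, re_sum, apply_ite re,
    zero_re]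
  norm_num
  linarith

noncomputable def xyTwoPointIntegrand (β : ℝ) (x y : V) (z : V → ℂ) : ℂ :=
  exp (I * (z y - z x) - β * complexXYHamiltonian G z)

variable {G} {β : ℝ} {x y : V}

theorem re_xyTwoPointIntegrand_ofReal (θ : V → ℝ) :
    (xyTwoPointIntegrand G β x y fun v => θ v).re
      = Real.cos (θ x - θ y) * Real.exp (-β * xyHamiltonian G θ) := by
  rw [xyTwoPointIntegrand, complexXYHamiltonian_ofReal, exp_re, mul_comm]
  simp only [sub_re, sub_im, mul_re, mul_im, I_re, I_im, ofReal_re, ofReal_im]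
  rw [← Real.cos_neg]
  ring_nf

theorem differentiable_xyTwoPointIntegrand : Differentiable ℂ (xyTwoPointIntegrand G β x y) := by
  have := differentiable_complexXYHamiltonian G
  unfold xyTwoPointIntegrand
  fun_prop

theorem periodic_xyTwoPointIntegrand_update [DecidableEq V] (z : V → ℂ) (w : V) :
    Periodic (fun ζ => xyTwoPointIntegrand G β x y (update z w ζ)) (2 * Real.pi) := fun ζ => by
  have hexp : Periodic (fun d => exp (I * d)) (2 * Real.pi) := fun d => by
    simp only [mul_add, exp_add, mul_comm I (2 * _), exp_two_pi_mul_I, mul_one]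
  simp only [xyTwoPointIntegrand, complexXYHamiltonian_update_add_two_pi, sub_eq_add_neg (I * _),
    exp_add, hexp.comp_update_sub_update]

theorem norm_xyTwoPointIntegrand_add_mul_I_le (hβ : 0 ≤ β) (θ a : V → ℝ)
    (hstep : ∀ u v, G.Adj u v → |a u - a v| ≤ 1) :
    ‖xyTwoPointIntegrand G β x y fun v => θ v + a v * I‖
      ≤ Real.exp (-(a y - a x) + β * edgeEnergy G a) * Real.exp (-β * xyHamiltonian G θ) := by
  rw [xyTwoPointIntegrand, norm_exp, ← Real.exp_add, Real.exp_le_exp]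
  have := mul_le_mul_of_nonneg_left (xyHamiltonian_sub_edgeEnergy_le_re G θ a hstep) hβ
  simp [mul_re, mul_im]
  nlinarith


theorem integral_cos_mul_exp_eq_re_integral_xyTwoPointIntegrand (a : V → ℝ) :
    ∫ θ in univ.pi fun _ : V => Ico 0 (2 * Real.pi),
        Real.cos (θ x - θ y) * Real.exp (-β * xyHamiltonian G θ)
      = (∫ θ in univ.pi fun _ : V => Ico 0 (2 * Real.pi),
          xyTwoPointIntegrand G β x y fun v => θ v + a v * I).re := by
  classical
  have hint : IntegrableOn (fun θ : V → ℝ => xyTwoPointIntegrand G β x y fun v => θ v)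
      (univ.pi fun _ : V => Ico 0 (2 * Real.pi)) :=
    (differentiable_xyTwoPointIntegrand.continuous.comp (by fun_prop)).integrableOn_univ_pi_Ico _ _
  rw [integral_univ_pi_Ico_add_mul_I_eq Real.two_pi_pos.le differentiable_xyTwoPointIntegrand
      (fun z w => by exact_mod_cast periodic_xyTwoPointIntegrand_update z w) a,
    ← RCLike.re_to_complex, ← integral_re hint]
  simp only [RCLike.re_to_complex, re_xyTwoPointIntegrand_ofReal]

theorem norm_integral_xyTwoPointIntegrand_add_mul_I_le (hβ : 0 ≤ β) (a : V → ℝ)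
    (hstep : ∀ u v, G.Adj u v → |a u - a v| ≤ 1) :
    ‖∫ θ in univ.pi fun _ : V => Ico 0 (2 * Real.pi),
        xyTwoPointIntegrand G β x y fun v => θ v + a v * I‖
      ≤ Real.exp (-(a y - a x) + β * edgeEnergy G a) *
          ∫ θ in univ.pi fun _ : V => Ico 0 (2 * Real.pi), Real.exp (-β * xyHamiltonian G θ) := by
  rw [← integral_const_mul]
  refine (norm_integral_le_integral_norm _).trans (integral_mono ?_ ?_
    fun θ => norm_xyTwoPointIntegrand_add_mul_I_le hβ θ a hstep)
  · exact (differentiable_xyTwoPointIntegrand.continuous.comp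
      (by fun_prop)).norm.integrableOn_univ_pi_Ico _ _
  · have := continuous_xyHamiltonian G
    exact (by fun_prop : Continuous _).integrableOn_univ_pi_Ico _ _

end XYModel

/-- McBryan–Spencer exponential decay bound for the XY model on a finite graph. -/
theorem mcbryan_spencer_decay {V : Type*} [Fintype V] (G : SimpleGraph V)
    (β : ℝ) (hβ : 0 < β) (x y : V) (a : V → ℝ) (m : ℝ)
    (hstep : ∀ u v : V, G.Adj u v → |a u - a v| ≤ 1 / 10)
    (henergy : β * edgeEnergy G a ≤ (a y - a x) / 2)
    (hm : m ≤ a y - a x) :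
    |(∫ θ in Set.univ.pi fun _ : V => Set.Ico (0 : ℝ) (2 * Real.pi),
        Real.cos (θ x - θ y) * Real.exp (-β * xyHamiltonian G θ)) /
      (∫ θ in Set.univ.pi fun _ : V => Set.Ico (0 : ℝ) (2 * Real.pi),
        Real.exp (-β * xyHamiltonian G θ))|
      ≤ Real.exp (-m / 2) := by
  have hZ : 0 ≤ ∫ θ in univ.pi fun _ : V => Ico 0 (2 * Real.pi),
      Real.exp (-β * xyHamiltonian G θ) := integral_nonneg fun θ => (Real.exp_pos _).le
  rw [abs_div, abs_of_nonneg hZ, integral_cos_mul_exp_eq_re_integral_xyTwoPointIntegrand a]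
  refine div_le_of_le_mul₀ hZ (Real.exp_pos _).le ((abs_re_le_norm _).trans
    ((norm_integral_xyTwoPointIntegrand_add_mul_I_le hβ.le a
      fun u v huv => (hstep u v huv).trans (by norm_num)).trans ?_))
  gcongr
  linarith
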